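/- Let (Ω, 𝓕) be a measurable space and let Π be a nonempty set of Markov (probability) kernels from (Ω, 𝓕) to itself. Let 𝒫_Π be the set of all probability measures μ on (Ω, 𝓕) such that μπ = μ for every π ∈ Π (i.e. the measure obtained by integrating the kernel π against μ equals μ). For μ ∈ 𝒫_Π, let 𝓘_Π(μ) be the collection of measurable sets A such that for every π ∈ Π, the function ω ↦ π(ω, A) equals the indicator function of A for μ-almost every ω. Then μ is an extreme point of the convex set 𝒫_Π (i.e. whenever μ = t·μ₁ + (1−t)·μ₂ with μ₁, μ₂ ∈ 𝒫_Π and 0 < t < 1, one has μ₁ = μ₂ = μ) if and only if μ is trivial on 𝓘_Π(μ), i.e. μ(A) ∈ {0, 1} for every A ∈ 𝓘_Π(μ). -/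

import Mathlib

open MeasureTheory ProbabilityTheory Set
open scoped ENNReal

/-!
If an invariant set `A` has `0 < μ A < 1`, then `μ = μ A • μ[|A] + μ Aᶜ • μ[|Aᶜ]` splits `μ`
into two different invariant probability measures.

Conversely, let `μ = t • μ₁ + (1 - t) • μ₂`. Then `μ₁ ≪ μ`, say with density `f`. The measure
`(f - 1)⁺ • μ`, the positive part of `μ₁ - μ`, is again invariant: its image under the kernel
dominates it, and has the same total mass. An invariant measure does not leak out of the set
`{f > 1}` carrying it, which makes `{f > 1}` an invariant set. So `μ {f > 1}` is `0` or `1`, i.e.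
`f ≤ 1` or `f ≥ 1` almost everywhere, and in both cases the probability measures `μ₁` and `μ`
are comparable, hence equal.
-/

lemma MeasureTheory.Measure.comp_mono_right {α β : Type*} [MeasurableSpace α]
    [MeasurableSpace β] {μ ν : Measure α} (h : μ ≤ ν) (κ : Kernel α β) :
    κ ∘ₘ μ ≤ κ ∘ₘ ν :=
  Measure.le_intro fun s hs _ => by
    simp only [Measure.bind_apply hs κ.aemeasurable]
    exact lintegral_mono' h le_rfl

lemma MeasureTheory.Measure.absolutelyContinuous_of_eq_smul_add {α : Type*} [MeasurableSpace α]
    {μ μ₁ μ₂ : Measure α} {a b : ℝ≥0∞} (h : μ = a • μ₁ + b • μ₂) (ha : a ≠ 0) : μ₁ ≪ μ :=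
  h ▸ (Measure.absolutelyContinuous_smul ha).add_right _

lemma MeasureTheory.withDensity_tsub_one_compl_setOf_one_lt {Ω : Type*} [MeasurableSpace Ω]
    (μ : Measure Ω) {f : Ω → ℝ≥0∞} (hf : Measurable f) :
    μ.withDensity (fun ω => f ω - 1) {ω | 1 < f ω}ᶜ = 0 := by
  have hA : MeasurableSet {ω | 1 < f ω} := measurableSet_lt measurable_const hf
  rw [withDensity_apply _ hA.compl]
  exact (setLIntegral_congr_fun hA.compl fun ω hω => tsub_eq_zero_of_le (not_lt.1 hω)).trans
    lintegral_zero

namespace ProbabilityTheory.Kernel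

variable {Ω : Type*} [MeasurableSpace Ω] {κ : Kernel Ω Ω} {μ : Measure Ω} {A s : Set Ω}

def IsInvariantSet (κ : Kernel Ω Ω) (μ : Measure Ω) (A : Set Ω) : Prop :=
  ∀ᵐ ω ∂μ, κ ω A = A.indicator (fun _ => 1) ω

lemma IsInvariantSet.compl [IsMarkovKernel κ] (hA : MeasurableSet A)
    (h : IsInvariantSet κ μ A) : IsInvariantSet κ μ Aᶜ := by
  filter_upwards [h] with ω hω
  by_cases hωA : ω ∈ A <;> simp [prob_compl_eq_one_sub hA, hω, hωA]

lemma IsInvariantSet.comp_restrict [IsMarkovKernel κ] (hA : MeasurableSet A)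
    (h : IsInvariantSet κ μ A) : κ ∘ₘ μ.restrict A = (κ ∘ₘ μ).restrict A := by
  ext s hs
  rw [Measure.restrict_apply hs, Measure.bind_apply hs κ.aemeasurable,
    Measure.bind_apply (hs.inter hA) κ.aemeasurable, ← lintegral_indicator hA]
  refine lintegral_congr_ae (h.mono fun ω hω => ?_)
  by_cases hωA : ω ∈ A
  · rw [indicator_of_mem hωA]
    refine (measure_inter_conull ?_).symm
    rw [prob_compl_eq_zero_iff hA, hω, indicator_of_mem hωA]
  · rw [indicator_of_notMem hωA]
    refine (measure_inter_null_of_null_right _ ?_).symm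
    rw [hω, indicator_of_notMem hωA]

lemma Invariant.cond [IsMarkovKernel κ] (hμ : Invariant κ μ) (hA : MeasurableSet A)
    (h : IsInvariantSet κ μ A) : Invariant κ μ[|A] := by
  rw [Invariant, ProbabilityTheory.cond, Measure.comp_smul, h.comp_restrict hA, hμ.def]

lemma Invariant.ae_apply_eq_zero (hμ : Invariant κ μ) (hs : MeasurableSet s) (h : μ s = 0) :
    ∀ᵐ ω ∂μ, κ ω s = 0 := by
  have hint : ∫⁻ ω, κ ω s ∂μ = 0 := by
    rw [← Measure.bind_apply hs κ.aemeasurable, hμ.def, h]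
  exact (lintegral_eq_zero_iff (κ.measurable_coe hs)).1 hint

lemma Invariant.isInvariantSet_of_ae_apply_eq_one [IsMarkovKernel κ] [IsFiniteMeasure μ]
    (hμ : Invariant κ μ) (hA : MeasurableSet A) (h : ∀ᵐ ω ∂μ, ω ∈ A → κ ω A = 1) :
    IsInvariantSet κ μ A := by
  have hin : ∫⁻ ω in A, κ ω A ∂μ = μ A := by
    rw [setLIntegral_congr_fun_ae hA h, MeasureTheory.setLIntegral_const, one_mul]
  have hout : ∫⁻ ω in Aᶜ, κ ω A ∂μ = 0 := by
    have hsplit := lintegral_add_compl (fun ω => κ ω A) (μ := μ) hA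
    rw [hin, ← Measure.bind_apply (m := μ) hA κ.aemeasurable, hμ.def] at hsplit
    exact (ENNReal.add_right_inj (measure_ne_top μ A)).1 (hsplit.trans (add_zero _).symm)
  have hout_ae : ∀ᵐ ω ∂μ, ω ∈ Aᶜ → κ ω A = 0 := (ae_restrict_iff' hA.compl).1
    ((lintegral_eq_zero_iff (κ.measurable_coe hA)).1 hout)
  filter_upwards [h, hout_ae] with ω hωin hωout
  by_cases hωA : ω ∈ A
  · simp [hωA, hωin hωA]
  · simp [hωA, hωout hωA]

lemma Invariant.withDensity_tsub_one [IsMarkovKernel κ] [IsFiniteMeasure μ] {f : Ω → ℝ≥0∞}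
    [IsFiniteMeasure (μ.withDensity f)] (hf : Measurable f) (hμ : Invariant κ μ)
    (hν : Invariant κ (μ.withDensity f)) : Invariant κ (μ.withDensity (fun ω => f ω - 1)) := by
  set σ := μ.withDensity (fun ω => f ω - 1)
  set A := {ω | 1 < f ω}
  have hA : MeasurableSet A := measurableSet_lt measurable_const hf
  have : IsFiniteMeasure σ :=
    isFiniteMeasure_of_le (μ.withDensity f) (withDensity_mono (ae_of_all _ fun _ => tsub_le_self))
  have hle : μ.withDensity f ≤ σ + μ := by
    calc μ.withDensity f ≤ μ.withDensity ((fun ω => f ω - 1) + 1) :=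
          withDensity_mono (ae_of_all _ fun _ => le_tsub_add)
      _ = σ + μ := by
          rw [MeasureTheory.withDensity_add_left (f := fun ω => f ω - 1) (by fun_prop),
            MeasureTheory.withDensity_one]
  have hle' : μ.withDensity f ≤ κ ∘ₘ σ + μ := by
    calc μ.withDensity f = κ ∘ₘ μ.withDensity f := hν.def.symm
      _ ≤ κ ∘ₘ (σ + μ) := Measure.comp_mono_right hle κ
      _ = κ ∘ₘ σ + μ := by rw [Measure.comp_add, hμ.def]
  have hsplit : ∀ s, MeasurableSet s →
      μ.withDensity f (s ∩ A) = σ (s ∩ A) + μ (s ∩ A) := by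
    intro s hs
    rw [withDensity_apply _ (hs.inter hA), withDensity_apply _ (hs.inter hA),
      ← MeasureTheory.setLIntegral_one, ← lintegral_add_right _ measurable_const]
    exact setLIntegral_congr_fun (hs.inter hA) fun ω hω => (tsub_add_cancel_of_le hω.2.le).symm
  refine (Measure.eq_of_le_of_measure_univ_eq (Measure.le_intro fun s hs _ => ?_)
    Measure.comp_apply_univ.symm).symm
  calc σ s = σ (s ∩ A) :=
        (measure_inter_conull (withDensity_tsub_one_compl_setOf_one_lt μ hf)).symm
    _ ≤ (κ ∘ₘ σ) (s ∩ A) :=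
        ENNReal.le_of_add_le_add_right (measure_ne_top μ _) (hsplit s hs ▸ hle' (s ∩ A))
    _ ≤ (κ ∘ₘ σ) s := measure_mono inter_subset_left

lemma Invariant.isInvariantSet_setOf_one_lt [IsMarkovKernel κ] [IsFiniteMeasure μ]
    {f : Ω → ℝ≥0∞} [IsFiniteMeasure (μ.withDensity f)] (hf : Measurable f)
    (hμ : Invariant κ μ) (hν : Invariant κ (μ.withDensity f)) :
    IsInvariantSet κ μ {ω | 1 < f ω} := by
  have hA : MeasurableSet {ω | 1 < f ω} := measurableSet_lt measurable_const hf
  have hleak := (hμ.withDensity_tsub_one hf hν).ae_apply_eq_zero hA.compl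
    (withDensity_tsub_one_compl_setOf_one_lt μ hf)
  rw [ae_withDensity_iff (by fun_prop)] at hleak
  refine hμ.isInvariantSet_of_ae_apply_eq_one hA (hleak.mono fun ω hω hωA => ?_)
  exact (prob_compl_eq_zero_iff hA).1 (hω (tsub_pos_of_lt hωA).ne')

end ProbabilityTheory.Kernel

namespace ProbabilityTheory

variable {Ω : Type*} [MeasurableSpace Ω] {𝒦 : Set (Kernel Ω Ω)} {μ ν : Measure Ω} {A : Set Ω}

def invariantProbabilityMeasures (𝒦 : Set (Kernel Ω Ω)) : Set (Measure Ω) :=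
  {ν | IsProbabilityMeasure ν ∧ ∀ κ ∈ 𝒦, κ.Invariant ν}

lemma eq_smul_cond_add_smul_cond_compl [IsFiniteMeasure μ] (hA : MeasurableSet A) :
    μ = μ A • μ[|A] + μ Aᶜ • μ[|Aᶜ] := by
  ext s hs
  simp only [Measure.add_apply, Measure.smul_apply, smul_eq_mul]
  rw [mul_comm, mul_comm (μ Aᶜ), cond_add_cond_compl_eq hA]

lemma cond_mem_invariantProbabilityMeasures (hmarkov : ∀ κ ∈ 𝒦, IsMarkovKernel κ)
    (hμ : μ ∈ invariantProbabilityMeasures 𝒦) (hA : MeasurableSet A)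
    (hAinv : ∀ κ ∈ 𝒦, κ.IsInvariantSet μ A) (hA0 : μ A ≠ 0) :
    μ[|A] ∈ invariantProbabilityMeasures 𝒦 := by
  have := hμ.1
  refine ⟨cond_isProbabilityMeasure hA0, fun κ hκ => ?_⟩
  have := hmarkov κ hκ
  exact (hμ.2 κ hκ).cond hA (hAinv κ hκ)

lemma eq_of_absolutelyContinuous_of_trivial_on_invariant_sets
    (hmarkov : ∀ κ ∈ 𝒦, IsMarkovKernel κ) (hμ : μ ∈ invariantProbabilityMeasures 𝒦)
    (hν : ν ∈ invariantProbabilityMeasures 𝒦) (hνμ : ν ≪ μ)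
    (htriv : ∀ A, MeasurableSet A → (∀ κ ∈ 𝒦, κ.IsInvariantSet μ A) → μ A = 0 ∨ μ A = 1) :
    ν = μ := by
  obtain ⟨_, hμinv⟩ := hμ
  obtain ⟨_, hνinv⟩ := hν
  set f := ν.rnDeriv μ
  have hf : Measurable f := Measure.measurable_rnDeriv ν μ
  have hdensity : μ.withDensity f = ν := Measure.withDensity_rnDeriv_eq ν μ hνμ
  have hA : MeasurableSet {ω | 1 < f ω} := measurableSet_lt measurable_const hf
  have hinvset : ∀ κ ∈ 𝒦, κ.IsInvariantSet μ {ω | 1 < f ω} := by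
    intro κ hκ
    have := hmarkov κ hκ
    rw [← hdensity] at hνinv
    exact (hμinv κ hκ).isInvariantSet_setOf_one_lt hf (hνinv κ hκ)
  rcases htriv _ hA hinvset with hnull | hfull
  · have hf_le : f ≤ᵐ[μ] 1 :=
      (measure_eq_zero_iff_ae_notMem.1 hnull).mono fun ω hω => not_lt.1 hω
    refine Measure.eq_of_le_of_isProbabilityMeasure ?_
    calc ν = μ.withDensity f := hdensity.symm
      _ ≤ μ.withDensity 1 := withDensity_mono hf_le
      _ = μ := withDensity_one
  · have hf_ge : 1 ≤ᵐ[μ] f :=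
      (measure_eq_zero_iff_ae_notMem.1 ((prob_compl_eq_zero_iff hA).2 hfull)).mono
        fun ω hω => (not_not.1 hω).le
    refine (Measure.eq_of_le_of_isProbabilityMeasure ?_).symm
    calc μ = μ.withDensity 1 := withDensity_one.symm
      _ ≤ μ.withDensity f := withDensity_mono hf_ge
      _ = ν := hdensity

end ProbabilityTheory

theorem extreme_iff_trivial_on_invariant_sets_general
    {Ω : Type*} [MeasurableSpace Ω]
    (𝒦 : Set (Kernel Ω Ω))
    (hmarkov : ∀ π ∈ 𝒦, IsMarkovKernel π)
    (P : Set (Measure Ω))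
    (hP : P = {ν : Measure Ω | IsProbabilityMeasure ν ∧
      ∀ π ∈ 𝒦, ν.bind (fun ω => π ω) = ν})
    (μ : Measure Ω) (hμ : μ ∈ P) :
    (∀ μ₁ ∈ P, ∀ μ₂ ∈ P, ∀ t : ℝ≥0∞, 0 < t → t < 1 →
        μ = t • μ₁ + (1 - t) • μ₂ → μ₁ = μ ∧ μ₂ = μ) ↔
      (∀ A : Set Ω, MeasurableSet A →
        (∀ π ∈ 𝒦, ∀ᵐ ω ∂μ, π ω A = A.indicator (fun _ => (1 : ℝ≥0∞)) ω) →
        μ A = 0 ∨ μ A = 1) := by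
  subst hP
  have := hμ.1
  constructor
  · intro hext A hA hAinv
    by_contra! hA01
    have hAc : μ Aᶜ ≠ 0 := by rw [Ne, prob_compl_eq_zero_iff hA]; exact hA01.2
    have hAcinv : ∀ π ∈ 𝒦, π.IsInvariantSet μ Aᶜ := fun π hπ =>
      have := hmarkov π hπ; Kernel.IsInvariantSet.compl hA (hAinv π hπ)
    have hsplit : μ = μ A • μ[|A] + (1 - μ A) • μ[|Aᶜ] := by
      rw [← prob_compl_eq_one_sub hA]; exact eq_smul_cond_add_smul_cond_compl hA
    obtain ⟨hcondA, -⟩ := hext _ (cond_mem_invariantProbabilityMeasures hmarkov hμ hA hAinv hA01.1)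
      _ (cond_mem_invariantProbabilityMeasures hmarkov hμ hA.compl hAcinv hAc)
      (μ A) (pos_iff_ne_zero.2 hA01.1) (prob_le_one.lt_of_ne hA01.2) hsplit
    exact hAc (by rw [← hcondA, cond_apply hA, inter_compl_self, measure_empty, mul_zero])
  · intro htriv μ₁ hμ₁ μ₂ hμ₂ t ht0 ht1 hsum
    have hac₁ := Measure.absolutelyContinuous_of_eq_smul_add hsum ht0.ne'
    have hac₂ := Measure.absolutelyContinuous_of_eq_smul_add (hsum.trans (add_comm _ _))
      (tsub_pos_of_lt ht1).ne'
    exact ⟨eq_of_absolutelyContinuous_of_trivial_on_invariant_sets hmarkov hμ hμ₁ hac₁ htriv,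
      eq_of_absolutelyContinuous_of_trivial_on_invariant_sets hmarkov hμ hμ₂ hac₂ htriv⟩

/-- Lemma 4.2 of the paper (Corollary 7.4 in Georgii): a probability measure
invariant under a nonempty family of Markov kernels is an extreme point of the
convex set of invariant probability measures if and only if it is trivial on the
σ-algebra of sets whose kernel-hitting function is a.s. the indicator function. -/
theorem extreme_iff_trivial_on_invariant_sets
    {Ω : Type*} [MeasurableSpace Ω]
    (𝒦 : Set (Kernel Ω Ω)) (hne : 𝒦.Nonempty)
    (hmarkov : ∀ π ∈ 𝒦, IsMarkovKernel π)
    (P : Set (Measure Ω))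
    (hP : P = {ν : Measure Ω | IsProbabilityMeasure ν ∧
      ∀ π ∈ 𝒦, ν.bind (fun ω => π ω) = ν})
    (μ : Measure Ω) (hμ : μ ∈ P) :
    (∀ μ₁ ∈ P, ∀ μ₂ ∈ P, ∀ t : ℝ≥0∞, 0 < t → t < 1 →
        μ = t • μ₁ + (1 - t) • μ₂ → μ₁ = μ ∧ μ₂ = μ) ↔
      (∀ A : Set Ω, MeasurableSet A →
        (∀ π ∈ 𝒦, ∀ᵐ ω ∂μ, π ω A = A.indicator (fun _ => (1 : ℝ≥0∞)) ω) →
        μ A = 0 ∨ μ A = 1) :=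
  extreme_iff_trivial_on_invariant_sets_general 𝒦 hmarkov P hP μ hμ
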